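/- Let M be a finite J-above, stable monoid and let W = { m ∈ M | every n ∈ M with n L m satisfies n H m } (the set of elements whose L-class equals their H-class). If m ∈ W and m' J m, then m' ∈ W. In other words, W is a union of J-classes of M. -/
import Mathlib


namespace GreenDefs

variable {M : Type*} [Monoid M]

/-- `a ≤_L b`. -/
def lle (a b : M) : Prop := ∃ u, a = u * b

/-- `a L b`. -/
def lrel (a b : M) : Prop := lle a b ∧ lle b a

/-- `a <_L b`. -/
def llt (a b : M) : Prop := lle a b ∧ ¬ lle b a

/-- `a ≤_R b`. -/
def rle (a b : M) : Prop := ∃ u, a = b * u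

/-- `a R b`. -/
def rrel (a b : M) : Prop := rle a b ∧ rle b a

/-- `a ≤_J b`. -/
def jle (a b : M) : Prop := ∃ u v, a = u * b * v

/-- `a J b`. -/
def jrel (a b : M) : Prop := jle a b ∧ jle b a

/-- `a <_J b`. -/
def jlt (a b : M) : Prop := jle a b ∧ ¬ jle b a

/-- `a H b`. -/
def hrel (a b : M) : Prop := lrel a b ∧ rrel a b

/-- A monoid is stable if `a·x J a` implies `a·x R a` and `x·a J a` implies
`x·a L a`. -/
def Stable (M : Type*) [Monoid M] : Prop :=
  ∀ a x : M, (jrel (a * x) a → rrel (a * x) a) ∧ (jrel (x * a) a → lrel (x * a) a)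

end GreenDefs


namespace GreenDefs

variable {M : Type*} [Monoid M]

lemma rle_trans' {a b c : M} (h1 : rle a b) (h2 : rle b c) : rle a c := by
  obtain ⟨u, rfl⟩ := h1; obtain ⟨v, rfl⟩ := h2
  exact ⟨v * u, mul_assoc _ _ _⟩

lemma jle_trans' {a b c : M} (h1 : jle a b) (h2 : jle b c) : jle a c := by
  obtain ⟨u, v, rfl⟩ := h1; obtain ⟨s, t, rfl⟩ := h2
  exact ⟨u * s, t * v, by simp [mul_assoc]⟩

lemma jle_of_lle {a b : M} (h : lle a b) : jle a b := by
  obtain ⟨u, rfl⟩ := h; exact ⟨u, 1, by simp⟩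

lemma jle_of_rle {a b : M} (h : rle a b) : jle a b := by
  obtain ⟨u, rfl⟩ := h; exact ⟨1, u, by simp⟩

end GreenDefs

open GreenDefs in
/-- In a finite `J`-above stable monoid, the set
`W = { m | every n with n L m satisfies n H m }` is a union of `J`-classes. -/
theorem stmt_16 {M : Type*} [Monoid M]
    (hfin : ∀ a : M, {b : M | jle a b}.Finite)
    (hstable : Stable M)
    (m m' : M)
    (hm : ∀ n : M, lrel n m → hrel n m)
    (hJ : jrel m' m) :
    ∀ n : M, lrel n m' → hrel n m' := by
  intro n hn
  obtain ⟨⟨x, hx⟩, ⟨y, hy⟩⟩ := hn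
  obtain ⟨⟨u, v, huv⟩, ⟨u', v', huv'⟩⟩ := hJ
  -- key J-facts
  have hm'm : jrel m' m := ⟨⟨u, v, huv⟩, ⟨u', v', huv'⟩⟩
  have hnm' : jrel n m' :=
    ⟨jle_of_lle ⟨x, hx⟩, jle_of_lle ⟨y, hy⟩⟩
  have hnm : jrel n m :=
    ⟨jle_trans' hnm'.1 hm'm.1, jle_trans' hm'm.2 hnm'.2⟩
  -- b := u * m  satisfies m' = b * v and b J m
  have hbJ : jrel (u * m) m := by
    refine ⟨⟨u, 1, by simp⟩, ?_⟩
    refine jle_trans' hm'm.2 ?_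
    exact ⟨1, v, by simp [huv, mul_assoc]⟩
  have hbL : lrel (u * m) m := (hstable m u).2 hbJ
  have hbR : rrel (u * m) m := (hm _ hbL).2
  have hm'R : rrel m' m := by
    have hm'Jb : jrel m' (u * m) :=
      ⟨⟨1, v, by simp [huv, mul_assoc]⟩,
       jle_trans' hbJ.1 hm'm.2⟩
    have := (hstable (u * m) v).1 (by rw [← huv]; exact hm'Jb)
    rw [← huv] at this
    exact ⟨rle_trans' this.1 hbR.1, rle_trans' hbR.2 this.2⟩
  -- a := (x * u) * m  satisfies n = a * v and a J m
  have hna : n = ((x * u) * m) * v := by rw [hx, huv]; simp [mul_assoc]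
  have haJ : jrel ((x * u) * m) m := by
    refine ⟨⟨x * u, 1, by simp⟩, ?_⟩
    refine jle_trans' hnm.2 ?_
    exact ⟨1, v, by simp [hna]⟩
  have haL : lrel ((x * u) * m) m := (hstable m (x * u)).2 haJ
  have haR : rrel ((x * u) * m) m := (hm _ haL).2
  have hnR : rrel n m := by
    have := (hstable ((x * u) * m) v).1
      ⟨⟨1, v, by simp [hna]⟩, by rw [← hna]; exact jle_trans' haJ.1 hnm.2⟩
    rw [← hna] at this
    exact ⟨rle_trans' this.1 haR.1, rle_trans' haR.2 this.2⟩
  -- conclude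
  refine ⟨⟨⟨x, hx⟩, ⟨y, hy⟩⟩, ?_⟩
  exact ⟨rle_trans' hnR.1 hm'R.2, rle_trans' hm'R.1 hnR.2⟩
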